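/- The unique solution of the initial value problem f'(t) = f(t)·(ln k − ln f(t))·P(t), f(t₀) = f₀ > 0, is f(t) = exp(ln k·(1 − e^{−(Q(t)−Q(t₀))}) + ln f₀·e^{−(Q(t)−Q(t₀))}). -/

import Mathlib

open Real

/-!
Existence is a direct differentiation. For uniqueness, `u = c - log g` satisfies the linear equation
`u' = -q' u`, so `u · exp q` has zero derivative and is constant on `[t₀, ∞)`; solving this
conservation law for `log g` gives the closed form.
-/

noncomputable def gompertzCurve (c : ℝ) (q : ℝ → ℝ) (t₀ f₀ t : ℝ) : ℝ :=
  exp (c * (1 - exp (-(q t - q t₀))) + log f₀ * exp (-(q t - q t₀)))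

section

variable {c : ℝ} {q : ℝ → ℝ} {t₀ f₀ : ℝ}

theorem gompertzCurve_pos (t : ℝ) : 0 < gompertzCurve c q t₀ f₀ t :=
  exp_pos _

theorem gompertzCurve_self (hf₀ : 0 < f₀) : gompertzCurve c q t₀ f₀ t₀ = f₀ := by
  simp [gompertzCurve, exp_log hf₀]

theorem log_gompertzCurve (t : ℝ) :
    log (gompertzCurve c q t₀ f₀ t) =
      c * (1 - exp (-(q t - q t₀))) + log f₀ * exp (-(q t - q t₀)) :=
  log_exp _

theorem hasDerivAt_gompertzCurve {p t : ℝ} (hq : HasDerivAt q p t) :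
    HasDerivAt (gompertzCurve c q t₀ f₀)
      (gompertzCurve c q t₀ f₀ t * (c - log (gompertzCurve c q t₀ f₀ t)) * p) t := by
  have hE : HasDerivAt (fun s => exp (-(q s - q t₀))) (exp (-(q t - q t₀)) * -p) t :=
    (hq.sub_const _).neg.exp
  refine (((hE.const_sub 1).const_mul c).add (hE.const_mul (log f₀))).exp.congr_deriv ?_
  rw [log_gompertzCurve, gompertzCurve, Pi.add_apply]
  ring

theorem hasDerivAt_log_sub_mul_exp {g : ℝ → ℝ} {p t : ℝ} (hq : HasDerivAt q p t)
    (hg : HasDerivAt g (g t * (c - log (g t)) * p) t) (hg_pos : 0 < g t) :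
    HasDerivAt (fun s => (c - log (g s)) * exp (q s)) 0 t := by
  have hlog : HasDerivAt (fun s => log (g s)) ((c - log (g t)) * p) t := by
    convert hg.log hg_pos.ne' using 1
    field_simp
  exact ((hlog.const_sub c).mul hq.exp).congr_deriv (by ring)

theorem log_sub_mul_exp_eq_of_hasDerivAt {g p : ℝ → ℝ}
    (hq : ∀ t, t₀ ≤ t → HasDerivAt q (p t) t) (hg_pos : ∀ t, t₀ ≤ t → 0 < g t)
    (hg : ∀ t, t₀ ≤ t → HasDerivAt g (g t * (c - log (g t)) * p t) t) {t : ℝ} (ht : t₀ ≤ t) :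
    (c - log (g t)) * exp (q t) = (c - log (g t₀)) * exp (q t₀) := by
  have hderiv : ∀ s, t₀ ≤ s → HasDerivAt (fun s => (c - log (g s)) * exp (q s)) 0 s :=
    fun s hs => hasDerivAt_log_sub_mul_exp (hq s hs) (hg s hs) (hg_pos s hs)
  exact constant_of_has_deriv_right_zero
    (fun s hs => (hderiv s hs.1).continuousAt.continuousWithinAt)
    (fun s hs => (hderiv s hs.1).hasDerivWithinAt) t ⟨ht, le_rfl⟩

theorem eq_gompertzCurve_of_hasDerivAt {g p : ℝ → ℝ}
    (hq : ∀ t, t₀ ≤ t → HasDerivAt q (p t) t) (hg_pos : ∀ t, t₀ ≤ t → 0 < g t)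
    (hg : ∀ t, t₀ ≤ t → HasDerivAt g (g t * (c - log (g t)) * p t) t) {t : ℝ} (ht : t₀ ≤ t) :
    g t = gompertzCurve c q t₀ (g t₀) t := by
  have hconst := log_sub_mul_exp_eq_of_hasDerivAt hq hg_pos hg ht
  have hlog : log (g t) = log (gompertzCurve c q t₀ (g t₀) t) := by
    have hE : exp (-(q t - q t₀)) * exp (q t) = exp (q t₀) := by
      rw [← exp_add]
      ring_nf
    refine mul_right_cancel₀ (exp_pos (q t)).ne' ?_
    rw [log_gompertzCurve]
    linear_combination -hconst + (c - log (g t₀)) * hE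
  exact log_injOn_pos (hg_pos t ht) (gompertzCurve_pos t) hlog

end

theorem stmt_3_general (Q : Polynomial ℝ) (k t₀ f₀ : ℝ) (hf₀ : 0 < f₀)
    (f : ℝ → ℝ)
    (hf : ∀ t, f t = Real.exp (Real.log k * (1 - Real.exp (-(Q.eval t - Q.eval t₀)))
        + Real.log f₀ * Real.exp (-(Q.eval t - Q.eval t₀)))) :
    (f t₀ = f₀ ∧ (∀ t, 0 < f t) ∧ ∀ t, t₀ ≤ t →
        HasDerivAt f (f t * (Real.log k - Real.log (f t)) * (Q.derivative.eval t)) t) ∧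
    ∀ g : ℝ → ℝ, g t₀ = f₀ → (∀ t, t₀ ≤ t → 0 < g t) →
      (∀ t, t₀ ≤ t →
        HasDerivAt g (g t * (Real.log k - Real.log (g t)) * (Q.derivative.eval t)) t) →
      ∀ t, t₀ ≤ t → g t = f t := by
  obtain rfl : f = gompertzCurve (log k) (fun t => Q.eval t) t₀ f₀ := funext hf
  refine ⟨⟨gompertzCurve_self hf₀, gompertzCurve_pos, fun t _ => hasDerivAt_gompertzCurve
    (Q.hasDerivAt t)⟩, fun g hg₀ hg_pos hg t ht => ?_⟩
  rw [← hg₀]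
  exact eq_gompertzCurve_of_hasDerivAt (fun t _ => Q.hasDerivAt t) hg_pos hg ht

/-- The unique positive solution of `f'(t) = f(t)·(ln k − ln f(t))·P(t)` on `[t₀, ∞)` with
`f(t₀) = f₀ > 0` is `f(t) = exp(ln k·(1 − e^{−(Q(t)−Q(t₀))}) + ln f₀·e^{−(Q(t)−Q(t₀))})`. -/
theorem stmt_3 (Q : Polynomial ℝ) (k t₀ f₀ : ℝ) (hk : 0 < k) (ht₀ : 0 ≤ t₀) (hf₀ : 0 < f₀)
    (f : ℝ → ℝ)
    (hf : ∀ t, f t = Real.exp (Real.log k * (1 - Real.exp (-(Q.eval t - Q.eval t₀)))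
        + Real.log f₀ * Real.exp (-(Q.eval t - Q.eval t₀)))) :
    (f t₀ = f₀ ∧ (∀ t, 0 < f t) ∧ ∀ t, t₀ ≤ t →
        HasDerivAt f (f t * (Real.log k - Real.log (f t)) * (Q.derivative.eval t)) t) ∧
    ∀ g : ℝ → ℝ, g t₀ = f₀ → (∀ t, t₀ ≤ t → 0 < g t) →
      (∀ t, t₀ ≤ t →
        HasDerivAt g (g t * (Real.log k - Real.log (g t)) * (Q.derivative.eval t)) t) →
      ∀ t, t₀ ≤ t → g t = f t :=
  stmt_3_general Q k t₀ f₀ hf₀ f hf
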